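/- Let L be a Lie algebra over a field of characteristic 0 such that every derivation of L is inner. If the center of L is nontrivial, then L is not solvable. -/

import Mathlib

/-!
A solvable `L ≠ 0` has `[L, L] ≠ L`, so there are a functional `f` vanishing on `[L, L]` and `x`
with `f x = 1`. Let `C` be the centralizer of `ker f`. For `y ∈ C` the rank-one map `a ↦ f a • y`
is a derivation, hence equal to `ad w` for some `w`; then `-w ∈ C` and `⁅x, -w⁆ = y`. So `ad x`
maps the finite-dimensional space `C` onto itself, hence injectively, while it kills the center,
which lies in `C`.
-/

namespace LieDerivation

variable {R L M : Type*} [CommRing R] [LieRing L] [LieAlgebra R L]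
  [AddCommGroup M] [Module R M] [LieRingModule L M] [LieModule R L M]

def smulRight (f : L →ₗ[R] R) (m : M) (hf : ∀ a b : L, f ⁅a, b⁆ = 0)
    (hm : ∀ a b : L, f a • ⁅b, m⁆ = f b • ⁅a, m⁆) : LieDerivation R L M where
  toLinearMap := f.smulRight m
  leibniz' a b := by
    simp only [LinearMap.smulRight_apply, hf, zero_smul, lie_smul, hm a b, sub_self]

@[simp]
lemma smulRight_apply (f : L →ₗ[R] R) (m : M) (hf) (hm) (a : L) :
    smulRight f m hf hm a = f a • m :=
  rfl

end LieDerivation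

namespace LieAlgebra

section CommRing

variable {R L : Type*} [CommRing R] [LieRing L] [LieAlgebra R L]

def centralizer (N : Submodule R L) : Submodule R L where
  carrier := {y | ∀ m ∈ N, ⁅y, m⁆ = 0}
  add_mem' ha hb m hm := by rw [add_lie, ha m hm, hb m hm, add_zero]
  zero_mem' m _ := zero_lie m
  smul_mem' c y hy m hm := by rw [smul_lie, hy m hm, smul_zero]

lemma center_le_centralizer (N : Submodule R L) :
    (center R L : Submodule R L) ≤ centralizer N := fun z hz m _ => by
  rw [← lie_skew, (LieModule.mem_maxTrivSubmodule R L L z).mp hz m, neg_zero]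

variable {f : L →ₗ[R] R}

lemma lie_mem_centralizer_ker (hf : ∀ a b : L, f ⁅a, b⁆ = 0) (x : L) {y : L}
    (hy : y ∈ centralizer (LinearMap.ker f)) : ⁅x, y⁆ ∈ centralizer (LinearMap.ker f) := by
  intro m hm
  rw [lie_lie, hy m hm, lie_zero, zero_sub, hy ⁅x, m⁆ (hf x m), neg_zero]

lemma lie_eq_smul_of_mem_centralizer_ker {x : L} (hfx : f x = 1) {y : L}
    (hy : y ∈ centralizer (LinearMap.ker f)) (b : L) : ⁅y, b⁆ = f b • ⁅y, x⁆ := by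
  have hb : b - f b • x ∈ LinearMap.ker f := by simp [hfx]
  rw [← sub_eq_zero, ← lie_smul, ← lie_sub, hy _ hb]

lemma exists_mem_centralizer_ker_lie_eq
    (hinner : ∀ d : LieDerivation R L L, ∃ w, d = LieDerivation.ad R L w)
    (hf : ∀ a b : L, f ⁅a, b⁆ = 0) {x : L} (hfx : f x = 1) {y : L}
    (hy : y ∈ centralizer (LinearMap.ker f)) :
    ∃ w ∈ centralizer (LinearMap.ker f), ⁅x, w⁆ = y := by
  have hsymm : ∀ a b, f a • ⁅b, y⁆ = f b • ⁅a, y⁆ := fun a b => by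
    rw [← lie_skew b, ← lie_skew a, lie_eq_smul_of_mem_centralizer_ker hfx hy a,
      lie_eq_smul_of_mem_centralizer_ker hfx hy b, smul_neg, smul_neg, smul_smul, smul_smul,
      mul_comm]
  obtain ⟨w, hw⟩ := hinner (LieDerivation.smulRight f y hf hsymm)
  have hwv : ∀ v, ⁅w, v⁆ = f v • y := fun v => by
    simpa using (LieDerivation.congr_fun hw v).symm
  refine ⟨-w, neg_mem fun m hm => ?_, ?_⟩
  · rw [hwv, LinearMap.mem_ker.mp hm, zero_smul]
  · rw [lie_neg, ← lie_skew, hwv, hfx, one_smul, neg_neg]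

end CommRing

variable {k L : Type*} [Field k] [LieRing L] [LieAlgebra k L]

lemma exists_dual_lie_eq_zero_of_derivedSeries_lt_top (hD : derivedSeries k L 1 < ⊤) :
    ∃ (f : L →ₗ[k] k) (x : L), (∀ a b : L, f ⁅a, b⁆ = 0) ∧ f x = 1 := by
  obtain ⟨x, -, hx⟩ := SetLike.exists_of_lt hD
  obtain ⟨f, hfx, hfD⟩ := Submodule.exists_dual_map_eq_bot_of_notMem
    (p := (derivedSeries k L 1 : Submodule k L)) hx inferInstance
  refine ⟨(f x)⁻¹ • f, x, fun a b => ?_, by simp [hfx]⟩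
  have hab : ⁅a, b⁆ ∈ derivedSeries k L 1 :=
    LieSubmodule.lie_mem_lie (LieSubmodule.mem_top a) (LieSubmodule.mem_top b)
  have : f ⁅a, b⁆ = 0 := (Submodule.mem_bot k).mp (hfD ▸ Submodule.mem_map_of_mem hab)
  simp [this]

theorem center_eq_bot_of_forall_eq_ad [FiniteDimensional k L]
    (hinner : ∀ d : LieDerivation k L L, ∃ w, d = LieDerivation.ad k L w)
    (hD : derivedSeries k L 1 < ⊤) : center k L = ⊥ := by
  obtain ⟨f, x, hf, hfx⟩ := exists_dual_lie_eq_zero_of_derivedSeries_lt_top hD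
  let adx := (ad k L x).restrict (p := centralizer (LinearMap.ker f))
    (q := centralizer (LinearMap.ker f)) fun _ hy => lie_mem_centralizer_ker hf x hy
  have hsurj : Function.Surjective adx := fun ⟨y, hy⟩ => by
    obtain ⟨w, hw, hxw⟩ := exists_mem_centralizer_ker_lie_eq hinner hf hfx hy
    exact ⟨⟨w, hw⟩, Subtype.ext hxw⟩
  have hinj : Function.Injective adx := LinearMap.injective_iff_surjective.mpr hsurj
  refine (LieSubmodule.eq_bot_iff _).mpr fun z hz => ?_
  have hzC := center_le_centralizer (LinearMap.ker f) hz
  have : adx ⟨z, hzC⟩ = 0 := Subtype.ext ((LieModule.mem_maxTrivSubmodule k L L z).mp hz x)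
  simpa using hinj (this.trans adx.map_zero.symm)

end LieAlgebra

theorem stmt2_general (k L : Type*) [Field k] [LieRing L] [LieAlgebra k L]
    [FiniteDimensional k L]
    (hinner : ∀ d : LieDerivation k L L, ∃ x : L, d = LieDerivation.ad k L x)
    (hcenter : LieAlgebra.center k L ≠ ⊥) :
    ¬ LieAlgebra.IsSolvable L := by
  intro hsol
  have : Nontrivial L := (LieSubmodule.nontrivial_iff k L L).mp ⟨_, _, hcenter⟩
  exact hcenter (LieAlgebra.center_eq_bot_of_forall_eq_ad hinner
    (LieAlgebra.derivedSeries_lt_top_of_solvable k L))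

/-- If every derivation of a Lie algebra `L` over a field of characteristic `0` is inner and the
center of `L` is nontrivial, then `L` is not solvable. -/
theorem stmt2 (k L : Type*) [Field k] [CharZero k] [LieRing L] [LieAlgebra k L]
    [FiniteDimensional k L]
    (hinner : ∀ d : LieDerivation k L L, ∃ x : L, d = LieDerivation.ad k L x)
    (hcenter : LieAlgebra.center k L ≠ ⊥) :
    ¬ LieAlgebra.IsSolvable L :=
  stmt2_general k L hinner hcenter
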